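/- arXiv:1811.09770 — 3 statements merged into one kernel-verified Lean document; each statement's English description precedes it below -/
import Mathlib

section
/- For any abelian group G, any n ≥ 1, any 0 ≤ k ≤ n, and any G-valued k-form f on ℤⁿ, the coderivative and the Hodge dual are related by δf = (−1)^{n(k+1)+1} · (*d*f); that is, for every x ∈ ℤⁿ, δf(x) = (−1)^{n(k+1)+1} · (*d*f)(y), where y is the center of the n-cell dx₁∧⋯∧dx_n and the outer Hodge star identifies cells of the dual of the dual lattice with cells of ℤⁿ. -/
/-!
Discrete exterior calculus on the cell complex of `ℤⁿ`.

A positively oriented `k`-cell `dx_{i₁} ∧ ⋯ ∧ dx_{i_k}` (with `i₁ < ⋯ < i_k`) at the point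
`x ∈ ℤⁿ` is encoded as the pair `(x, S)` with `S = {i₁, …, i_k}`, so its dimension is `S.card`.
A `G`-valued `k`-form is a `G`-valued function on cells; only its values on cells of
dimension `k` are relevant (a single function type conveniently encodes forms of all
degrees; every statement below is made on cells of the appropriate dimension).

The dual lattice `*ℤⁿ` is identified with `ℤⁿ`: the dual vertex `y = z + (1/2, …, 1/2)`
(the center of the unit `n`-cell with base vertex `z`) is identified with the integer point
`z`, and the edges of the dual lattice at `y` point in the *negative* coordinate directions;
the dual cell `dy_{j₁} ∧ ⋯ ∧ dy_{j_m}` at `y` is encoded as the pair `(z, {j₁, …, j_m})`.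
-/

/-- A cell of `ℤⁿ` (or of the dual lattice `*ℤⁿ`): a base point and a set of spanning
directions. -/
abbrev GCell (n : ℕ) := (Fin n → ℤ) × Finset (Fin n)

/-- The unit vector `e_i`. -/
def unitV (n : ℕ) (i : Fin n) : Fin n → ℤ := fun m => if m = i then 1 else 0

section Forms

variable {n : ℕ} {G : Type*} [AddCommGroup G]

/-- The discrete exterior derivative on `ℤⁿ`: for a `k`-form `f`,
`(df)_{i₁⋯i_{k+1}}(x) = ∑_j (−1)^{j−1} ∂_{i_j} f_{i₁⋯î_j⋯i_{k+1}}(x)`, where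
`∂_i h(x) = h(x + e_i) − h(x)`. -/
def dF (f : GCell n → G) : GCell n → G := fun c =>
  ∑ i ∈ c.2.attach,
    ((-1 : ℤ) ^ (c.2.filter (fun j => j < i.1)).card) •
      (f (c.1 + unitV n i.1, c.2.erase i.1) - f (c.1, c.2.erase i.1))

/-- The exterior derivative on the dual lattice: the same formula as `dF` but with `∂_i`
replaced by `∂̄_i`, where `∂̄_i h(y) = h(y) − h(y − e_i)`. -/
def dFDual (f : GCell n → G) : GCell n → G := fun c =>
  ∑ i ∈ c.2.attach,
    ((-1 : ℤ) ^ (c.2.filter (fun j => j < i.1)).card) •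
      (f (c.1, c.2.erase i.1) - f (c.1 - unitV n i.1, c.2.erase i.1))

/-- The discrete coderivative on `ℤⁿ`: for a `k`-form `f`,
`δf(x) = ∑_{i₁<⋯<i_k} ∑_l (−1)^l ∂̄_{i_l} f_{i₁⋯i_k}(x) dx_{i₁} ∧ ⋯ ∧ dx̂_{i_l} ∧ ⋯ ∧ dx_{i_k}`,
where `∂̄_i h(x) = h(x) − h(x − e_i)`  (and `δf = 0` for `0`-forms). -/
def codiff (f : GCell n → G) : GCell n → G := fun c =>
  ∑ i ∈ (c.2ᶜ).attach,
    ((-1 : ℤ) ^ ((c.2.filter (fun j => j < i.1)).card + 1)) •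
      (f (c.1, insert i.1 c.2) - f (c.1 - unitV n i.1, insert i.1 c.2))

/-- The sign of the permutation `(i₁, …, i_k, j₁, …, j_{n−k})`, where `i₁ < ⋯ < i_k` lists
`S` and `j₁ < ⋯ < j_{n−k}` lists its complement. -/
def hodgeSign (S : Finset (Fin n)) : ℤ :=
  (-1) ^ (∑ i ∈ S, ((Sᶜ : Finset (Fin n)).filter (fun j => j < i)).card)

/-- The Hodge dual of a `k`-form `f` on `ℤⁿ`: the `(n−k)`-form `*f` on the dual lattice
determined by `*f(*c) = f(c)`, i.e. `*f(z, T) = s · f(z, Tᶜ)` with `s` the sign of the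
permutation `(Tᶜ, T)`. -/
def hodgeToDual (f : GCell n → G) : GCell n → G := fun c =>
  hodgeSign (c.2ᶜ) • f (c.1, c.2ᶜ)

/-- The Hodge dual of a form `g` on the dual lattice `*ℤⁿ`: the form `*g` on `ℤⁿ`
determined by `*g(*c') = g(c')`, i.e. `*g(x, S) = (−1)^{|S|·|Sᶜ|} s · g(x, Sᶜ)` with `s`
the sign of the permutation `(S, Sᶜ)`. -/
def hodgeToPrimal (g : GCell n → G) : GCell n → G := fun c =>
  ((-1 : ℤ) ^ (c.2.card * (c.2ᶜ : Finset (Fin n)).card) * hodgeSign c.2) • g (c.1, c.2ᶜ)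

end Forms

section Cube

variable {n : ℕ}

/-- Membership of a point in the cube `[a₁, a₁+w] × ⋯ × [a_n, a_n+w] ∩ ℤⁿ`. -/
def InCube (a : Fin n → ℤ) (w : ℕ) (v : Fin n → ℤ) : Prop :=
  ∀ m, a m ≤ v m ∧ v m ≤ a m + w

/-- `v` is a vertex of the cell `c` (that is, `v = x + ∑_{i ∈ T} e_i` for some `T ⊆ S`). -/
def CellVert (c : GCell n) (v : Fin n → ℤ) : Prop :=
  ∃ T ⊆ c.2, v = fun m => c.1 m + (if m ∈ T then 1 else 0)

/-- The cell `c` is in the cube: all its vertices are in the cube. -/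
def CellIn (a : Fin n → ℤ) (w : ℕ) (c : GCell n) : Prop :=
  ∀ m, a m ≤ c.1 m ∧ c.1 m + (if m ∈ c.2 then 1 else 0) ≤ a m + w

/-- A boundary vertex of the cube. -/
def BdryVtx (a : Fin n → ℤ) (w : ℕ) (v : Fin n → ℤ) : Prop :=
  InCube a w v ∧ ∃ m, v m = a m ∨ v m = a m + w

/-- The cell `c` is on the boundary of the cube: all its vertices are boundary vertices. -/
def CellOnBdry (a : Fin n → ℤ) (w : ℕ) (c : GCell n) : Prop :=
  CellIn a w c ∧ ∀ v, CellVert c v → BdryVtx a w v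

/-- The cell `c` is outside the cube: some vertex of `c` is outside the cube. -/
def CellOutside (a : Fin n → ℤ) (w : ℕ) (c : GCell n) : Prop :=
  ∃ v, CellVert c v ∧ ¬ InCube a w v

lemma cellIn_iff {a : Fin n → ℤ} {w : ℕ} {c : GCell n} :
    CellIn a w c ↔ ∀ v, CellVert c v → InCube a w v := by
  constructor
  · rintro h v ⟨T, hT, rfl⟩ m
    obtain ⟨h1, h2⟩ := h m
    by_cases hm : m ∈ T
    · have hmS : m ∈ c.2 := hT hm
      simp only [hm, if_pos, hmS] at *
      omega
    · simp only [hm, if_neg, not_false_iff, add_zero]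
      constructor
      · exact h1
      · split at h2 <;> omega
  · intro h m
    have h0 := h c.1 ⟨∅, Finset.empty_subset _, by funext m; simp⟩
    constructor
    · exact (h0 m).1
    · by_cases hm : m ∈ c.2
      · have := (h (fun m' => c.1 m' + (if m' ∈ ({m} : Finset (Fin n)) then 1 else 0))
          ⟨{m}, by simpa using hm, rfl⟩) m
        simpa [hm] using this.2
      · have := h0 m
        simpa [hm] using this.2

lemma cellIn_erase {a : Fin n → ℤ} {w : ℕ} {c : GCell n} (h : CellIn a w c) (i : Fin n) :
    CellIn a w (c.1, c.2.erase i) := by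
  intro m
  obtain ⟨h1, h2⟩ := h m
  refine ⟨h1, ?_⟩
  by_cases hm : m ∈ c.2.erase i
  · simpa [hm, Finset.mem_of_mem_erase hm] using h2
  · simp only [hm, if_neg, not_false_iff, add_zero]
    split at h2 <;> omega

lemma cellIn_shift_erase {a : Fin n → ℤ} {w : ℕ} {c : GCell n} (h : CellIn a w c)
    {i : Fin n} (hi : i ∈ c.2) :
    CellIn a w (c.1 + unitV n i, c.2.erase i) := by
  intro m
  obtain ⟨h1, h2⟩ := h m
  simp only [Pi.add_apply, unitV]
  by_cases hmi : m = i
  · subst hmi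
    have hmm : m ∉ c.2.erase m := by simp
    simp only [if_pos rfl, hmm, if_neg, not_false_iff, add_zero]
    simp only [hi, if_pos] at h2
    omega
  · simp only [hmi, if_neg, not_false_iff, add_zero]
    refine ⟨h1, ?_⟩
    by_cases hm : m ∈ c.2.erase i
    · simpa [hm, Finset.mem_of_mem_erase hm] using h2
    · simp only [hm, if_neg, not_false_iff, add_zero]
      split at h2 <;> omega

variable {G : Type*} [AddCommGroup G]

/-- A `G`-valued form on the cube with corner `a` and width `w`: a function on the cells of
the cube (of all dimensions; only the values in one dimension are relevant at a time). -/
abbrev FormC (a : Fin n → ℤ) (w : ℕ) (G : Type*) := {c : GCell n // CellIn a w c} → G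

/-- The exterior derivative of a form on a cube, given by the same formula as `dF`. -/
def dFC (a : Fin n → ℤ) (w : ℕ) (f : FormC a w G) : FormC a w G := fun c =>
  ∑ i ∈ c.1.2.attach,
    ((-1 : ℤ) ^ (c.1.2.filter (fun j => j < i.1)).card) •
      (f ⟨(c.1.1 + unitV n i.1, c.1.2.erase i.1), cellIn_shift_erase c.2 i.2⟩
        - f ⟨(c.1.1, c.1.2.erase i.1), cellIn_erase c.2 i.1⟩)

end Cube

section DegreeForms

variable {n : ℕ} {G : Type*} [AddCommGroup G]

/-- A `G`-valued `k`-form on the cube with corner `a` and width `w`: a function on the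
positively oriented `k`-cells in the cube. -/
abbrev FormB (a : Fin n → ℤ) (w : ℕ) (k : ℕ) (G : Type*) :=
  {c : GCell n // CellIn a w c ∧ c.2.card = k} → G

/-- The exterior derivative of a `k`-form on a cube, as a `(k+1)`-form on the cube. -/
def dB {a : Fin n → ℤ} {w : ℕ} {k : ℕ} (f : FormB a w k G) : FormB a w (k + 1) G := fun c =>
  ∑ i ∈ c.1.2.attach,
    ((-1 : ℤ) ^ (c.1.2.filter (fun j => j < i.1)).card) •
      (f ⟨(c.1.1 + unitV n i.1, c.1.2.erase i.1),
          ⟨cellIn_shift_erase c.2.1 i.2, by simp [Finset.card_erase_of_mem i.2, c.2.2]⟩⟩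
        - f ⟨(c.1.1, c.1.2.erase i.1),
          ⟨cellIn_erase c.2.1 i.1, by simp [Finset.card_erase_of_mem i.2, c.2.2]⟩⟩)

open scoped Classical in
/-- The extension of a `k`-form on a cube to a form on all of `ℤⁿ`, by zero outside. -/
noncomputable def extZ (a : Fin n → ℤ) (w : ℕ) (k : ℕ) (f : FormB a w k G) :
    GCell n → G := fun c =>
  if h : CellIn a w c ∧ c.2.card = k then f ⟨c, h⟩ else 0

end DegreeForms

section DualCube

variable {n : ℕ}

/-!
In the integer coordinates for the dual lattice described above, the dual cube `*B` of the
cube `B` with corner `a` and width `w` (whose dual vertices are the centers of the unit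
`n`-cells meeting `B`, i.e. `*B = [a−1/2, a+w+1/2]ⁿ ∩ *ℤⁿ`) has vertex set `[a−1, a+w]ⁿ`;
a dual cell `(z, T)` has vertices `z − ∑_{i∈T'} e_i` for `T' ⊆ T`.
-/

/-- Membership of a dual-lattice point (in integer coordinates) in the dual cube `*B`. -/
def InDCube (a : Fin n → ℤ) (w : ℕ) (v : Fin n → ℤ) : Prop :=
  ∀ m, a m - 1 ≤ v m ∧ v m ≤ a m + w

/-- `v` is a vertex of the dual cell `c` (i.e. `v = z − ∑_{i ∈ T'} e_i` for some `T' ⊆ T`). -/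
def DCellVert (c : GCell n) (v : Fin n → ℤ) : Prop :=
  ∃ T ⊆ c.2, v = fun m => c.1 m - (if m ∈ T then 1 else 0)

/-- The dual cell `c` is in the dual cube `*B`: all its vertices are in `*B`. -/
def DCellIn (a : Fin n → ℤ) (w : ℕ) (c : GCell n) : Prop :=
  ∀ m, a m - 1 ≤ c.1 m - (if m ∈ c.2 then 1 else 0) ∧ c.1 m ≤ a m + w

/-- A boundary vertex of the dual cube `*B`. -/
def DBdryVtx (a : Fin n → ℤ) (w : ℕ) (v : Fin n → ℤ) : Prop :=
  InDCube a w v ∧ ∃ m, v m = a m - 1 ∨ v m = a m + w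

/-- The dual cell `c` is on the boundary of `*B`: all its vertices are boundary vertices. -/
def DCellOnBdry (a : Fin n → ℤ) (w : ℕ) (c : GCell n) : Prop :=
  DCellIn a w c ∧ ∀ v, DCellVert c v → DBdryVtx a w v

/-- The dual cell `c` is outside `*B`: some vertex of `c` is outside `*B`. -/
def DCellOutside (a : Fin n → ℤ) (w : ℕ) (c : GCell n) : Prop :=
  ∃ v, DCellVert c v ∧ ¬ InDCube a w v

/-- The Hodge dual of the cell `(x, S)`, as an unoriented cell of the dual lattice:
the `(n−k)`-cell `(x, Sᶜ)`. -/
def dualCell (c : GCell n) : GCell n := (c.1, (c.2ᶜ : Finset (Fin n)))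

lemma dCellIn_erase {a : Fin n → ℤ} {w : ℕ} {c : GCell n} (h : DCellIn a w c) (i : Fin n) :
    DCellIn a w (c.1, c.2.erase i) := by
  intro m
  obtain ⟨h1, h2⟩ := h m
  refine ⟨?_, h2⟩
  by_cases hm : m ∈ c.2.erase i
  · simpa [hm, Finset.mem_of_mem_erase hm] using h1
  · simp only [hm, if_neg, not_false_iff, sub_zero]
    split at h1 <;> omega

lemma dCellIn_shift_erase {a : Fin n → ℤ} {w : ℕ} {c : GCell n} (h : DCellIn a w c)
    {i : Fin n} (hi : i ∈ c.2) :
    DCellIn a w (c.1 - unitV n i, c.2.erase i) := by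
  intro m
  obtain ⟨h1, h2⟩ := h m
  simp only [Pi.sub_apply, unitV]
  by_cases hmi : m = i
  · subst hmi
    have hmm : m ∉ c.2.erase m := by simp
    simp only [if_pos rfl, hmm, if_neg, not_false_iff, sub_zero]
    simp only [hi, if_pos] at h1
    omega
  · simp only [hmi, if_neg, not_false_iff, sub_zero]
    refine ⟨?_, h2⟩
    by_cases hm : m ∈ c.2.erase i
    · simpa [hm, Finset.mem_of_mem_erase hm] using h1
    · simp only [hm, if_neg, not_false_iff, sub_zero]
      split at h1 <;> omega

variable {G : Type*} [AddCommGroup G]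

/-- A `G`-valued `j`-form on the dual cube `*B`: a function on the `j`-cells of the dual
lattice lying in `*B`. -/
abbrev FormDB (a : Fin n → ℤ) (w : ℕ) (j : ℕ) (G : Type*) :=
  {c : GCell n // DCellIn a w c ∧ c.2.card = j} → G

/-- The exterior derivative of a `j`-form on the dual cube `*B`, as a `(j+1)`-form on `*B`
(the same formula as `dF`, with `∂_i` replaced by `∂̄_i`). -/
def dDB {a : Fin n → ℤ} {w : ℕ} {j : ℕ} (g : FormDB a w j G) : FormDB a w (j + 1) G :=
  fun c =>
    ∑ i ∈ c.1.2.attach,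
      ((-1 : ℤ) ^ (c.1.2.filter (fun j' => j' < i.1)).card) •
        (g ⟨(c.1.1, c.1.2.erase i.1),
            ⟨dCellIn_erase c.2.1 i.1, by simp [Finset.card_erase_of_mem i.2, c.2.2]⟩⟩
          - g ⟨(c.1.1 - unitV n i.1, c.1.2.erase i.1),
            ⟨dCellIn_shift_erase c.2.1 i.2, by simp [Finset.card_erase_of_mem i.2, c.2.2]⟩⟩)

open scoped Classical in
/-- The Hodge dual `*f`, a `j`-form on the dual cube `*B`, of a `k`-form `f` on the cube
`B`: it is determined by `*f(*c) = f(c)` on the internal cells of `*B` (equivalently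
`*f(z,T) = s·f(z,Tᶜ)` with `s` the sign of the permutation `(Tᶜ, T)`), and is zero on the
boundary cells of `*B`. -/
noncomputable def starB (a : Fin n → ℤ) (w : ℕ) (k : ℕ) {j : ℕ} (f : FormB a w k G) :
    FormDB a w j G := fun c =>
  if DCellOnBdry a w c.1 then 0
  else hodgeSign ((c.1.2ᶜ : Finset (Fin n))) • extZ a w k f (c.1.1, (c.1.2ᶜ : Finset (Fin n)))

end DualCube


/-!
Both sides are sums over the directions `i ∉ S` of the backward difference of `f` on the cell
`(x, insert i S)`: the double complement `((Sᶜ).erase i)ᶜ = insert i S` matches the terms, and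
it remains to compare signs. Moving `i` from `Sᶜ` into `S` multiplies the Hodge sign by
`(-1)^(#{j ∉ S | j < i} + #{s ∈ S | i < s})`, and what is left is the parity identity
`n(k + 1) + (k - 1)(n - k + 1) + (k - 1) ≡ 0 (mod 2)`.
-/

lemma even_codiff_sign_exponent {n s t a b : ℕ} (hab : a + b = s) (hn : s + t = n) :
    Even (a + 1 + (n * (s + 1 + 1) + 1 + s * t + b)) := by
  subst hab hn
  rw [show a + 1 + ((a + b + t) * (a + b + 1 + 1) + 1 + (a + b) * t + b) =
      (a + b) * (a + b + 1) + 2 * (1 + (a + b) + t + (a + b) * t) by ring]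
  exact (Nat.even_mul_succ_self _).add (even_two_mul _)

section HodgeSign

open Finset

variable {n : ℕ} {S : Finset (Fin n)} {i : Fin n}

lemma card_filter_lt_add_card_filter_gt (hi : i ∉ S) :
    #{s ∈ S | s < i} + #{s ∈ S | i < s} = #S := by
  rw [← card_union_of_disjoint (disjoint_filter.2 fun _ _ h h' => lt_asymm h h'), ← filter_or]
  exact congrArg card (filter_true_of_mem fun s hs => (ne_of_mem_of_not_mem hs hi).lt_or_gt)

lemma sum_card_filter_compl_lt_insert (hi : i ∉ S) :
    ∑ s ∈ insert i S, #{j ∈ (insert i S)ᶜ | j < s} + #{s ∈ S | i < s} =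
      #{j ∈ Sᶜ | j < i} + ∑ s ∈ S, #{j ∈ Sᶜ | j < s} := by
  have hnew : #{j ∈ Sᶜ.erase i | j < i} = #{j ∈ Sᶜ | j < i} := by
    rw [filter_erase, erase_eq_of_notMem (by simp)]
  have hold (s : Fin n) : #{j ∈ Sᶜ.erase i | j < s} + (if i < s then 1 else 0) =
      #{j ∈ Sᶜ | j < s} := by
    rw [filter_erase]
    split_ifs with h
    · exact card_erase_add_one (mem_filter.2 ⟨mem_compl.2 hi, h⟩)
    · rw [add_zero, erase_eq_of_notMem (by simp [h])]
  rw [sum_insert hi, compl_insert, hnew, add_assoc, card_filter (fun s => i < s) S,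
    ← sum_add_distrib]
  exact congrArg _ (sum_congr rfl fun s _ => hold s)

lemma hodgeSign_mul_self (S : Finset (Fin n)) : hodgeSign S * hodgeSign S = 1 :=
  pow_mul_pow_eq_one _ rfl

lemma hodgeSign_insert (hi : i ∉ S) :
    hodgeSign (insert i S) =
      (-1) ^ #{j ∈ Sᶜ | j < i} * (-1) ^ #{s ∈ S | i < s} * hodgeSign S := by
  have h := congrArg ((-1 : ℤ) ^ ·) (sum_card_filter_compl_lt_insert hi)
  simp only [pow_add] at h
  change hodgeSign (insert i S) * _ = _ * hodgeSign S at h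
  have hsq : (-1 : ℤ) ^ #{s ∈ S | i < s} * (-1) ^ #{s ∈ S | i < s} = 1 :=
    pow_mul_pow_eq_one _ rfl
  linear_combination (-1 : ℤ) ^ #{s ∈ S | i < s} * h - hodgeSign (insert i S) * hsq

lemma codiff_sign_eq_hodge_d_hodge_sign (hi : i ∉ S) :
    (-1 : ℤ) ^ (#{s ∈ S | s < i} + 1) =
      (-1) ^ (n * (#S + 1 + 1) + 1) * ((-1) ^ (#S * #Sᶜ) * hodgeSign S) *
        (-1) ^ #{j ∈ Sᶜ | j < i} * hodgeSign (insert i S) := by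
  have hparity := even_codiff_sign_exponent (card_filter_lt_add_card_filter_gt hi)
    (by rw [card_add_card_compl, Fintype.card_fin] : #S + #Sᶜ = n)
  have hsq : (-1 : ℤ) ^ #{j ∈ Sᶜ | j < i} * (-1) ^ #{j ∈ Sᶜ | j < i} = 1 :=
    pow_mul_pow_eq_one _ rfl
  rw [hodgeSign_insert hi, neg_one_pow_congr (Nat.even_add.1 hparity)]
  simp only [pow_add]
  linear_combination -(-1 : ℤ) ^ (n * (#S + 1 + 1)) * (-1) * (-1) ^ (#S * #Sᶜ) *
    (-1) ^ #{s ∈ S | i < s} * (hodgeSign S * hodgeSign S * hsq + hodgeSign_mul_self S)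

end HodgeSign

theorem coderivative_eq_hodge_d_hodge_general (n : ℕ) (G : Type*) [AddCommGroup G]
    (k : ℕ) (f : GCell n → G) (c : GCell n) (hc : c.2.card + 1 = k) :
    codiff f c =
      ((-1 : ℤ) ^ (n * (k + 1) + 1)) • hodgeToPrimal (dFDual (hodgeToDual f)) c := by
  obtain ⟨x, S⟩ := c
  subst hc
  simp only [codiff, hodgeToPrimal, dFDual, hodgeToDual, Finset.smul_sum]
  refine Finset.sum_congr rfl fun ⟨i, hi⟩ _ => ?_
  simp only [Finset.compl_erase, compl_compl]
  rw [← smul_sub, smul_smul, smul_smul, smul_smul]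
  exact congrArg (· • _) (codiff_sign_eq_hodge_d_hodge_sign (Finset.mem_compl.1 hi))

/-- **Lemma 2.3 (Coderivative and Hodge dual).**
For any abelian group `G`, any `n ≥ 1`, any `0 ≤ k ≤ n` and any `G`-valued `k`-form `f` on
`ℤⁿ`, the coderivative and the Hodge dual are related by `δf = (−1)^{n(k+1)+1} · (*d*f)`:
for every `(k−1)`-cell `c` (at the point `x`), `δf(x) = (−1)^{n(k+1)+1} (*d*f)(y)`, where
`y` is the center of the `n`-cell at `x` (so that, in our integer coordinates for `*ℤⁿ`,
the base points agree), and the outer Hodge star identifies cells of the dual of the dual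
lattice with cells of `ℤⁿ`.  (For `k = 0` there are no `(k−1)`-cells and `δf = 0`,
so the statement is vacuously the trivial one.) -/
theorem coderivative_eq_hodge_d_hodge (n : ℕ) (hn : 1 ≤ n) (G : Type*) [AddCommGroup G]
    (k : ℕ) (hk : k ≤ n) (f : GCell n → G) (c : GCell n) (hc : c.2.card + 1 = k) :
    codiff f c =
      ((-1 : ℤ) ^ (n * (k + 1) + 1)) • hodgeToPrimal (dFDual (hodgeToDual f)) c :=
  coderivative_eq_hodge_d_hodge_general n G k f c hc
end

section
/- Let B be any cube in ℤⁿ and 0 ≤ k ≤ n. Then a k-cell c of ℤⁿ is outside B if and only if its Hodge dual *c is either outside the dual cube *B or on the boundary of *B. Moreover, if c is a k-cell outside B that contains a (k−1)-cell of B (a face of c all of whose vertices are in B), then *c belongs to the boundary of *B. -/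
/-!
In coordinates, the cell `c = (x, S)` lies in `B` iff `a_m ≤ x_m ≤ a_m + w - [m ∈ S]`
for all `m`, while `*c = (x, Sᶜ)` lies in `*B` iff `a_m - [m ∈ S] ≤ x_m ≤ a_m + w`.
The two conditions differ only in the directions `m ∈ S`, which are exactly the directions
not spanned by `*c`, and there only by the two values `a_m - 1` and `a_m + w`, i.e. the two
faces of `*B` normal to `e_m`. Hence `c` leaves `B` while `*c` stays in `*B` exactly when
`*c` lies in such a face. A face of `c` in `B` already forces `*c` into `*B`.
-/

open Finset

section DualCells

variable {n : ℕ} {a : Fin n → ℤ} {w : ℕ}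

lemma cellOutside_iff_not_cellIn {c : GCell n} : CellOutside a w c ↔ ¬ CellIn a w c := by
  simp only [cellIn_iff, CellOutside, not_forall, exists_prop]

lemma dCellIn_iff {c : GCell n} : DCellIn a w c ↔ ∀ v, DCellVert c v → InDCube a w v := by
  constructor
  · rintro h v ⟨T, hT, rfl⟩ m
    have := h m
    by_cases hmT : m ∈ T
    · simp only [hmT, hT hmT, if_true] at *
      omega
    · simp only [hmT, if_false] at *
      split_ifs at this <;> omega
  · intro h m
    exact ⟨(h _ ⟨c.2, subset_rfl, rfl⟩ m).1,
      by simpa using (h _ ⟨∅, empty_subset _, rfl⟩ m).2⟩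

lemma dCellOutside_iff_not_dCellIn {c : GCell n} : DCellOutside a w c ↔ ¬ DCellIn a w c := by
  simp only [dCellIn_iff, DCellOutside, not_forall, exists_prop]

lemma dCellOnBdry_iff (hw : 0 < w) {c : GCell n} :
    DCellOnBdry a w c ↔ DCellIn a w c ∧ ∃ m ∉ c.2, c.1 m = a m - 1 ∨ c.1 m = a m + w := by
  classical
  refine ⟨fun ⟨hin, hbdry⟩ => ⟨hin, ?_⟩, fun ⟨hin, m, hm, hxm⟩ => ⟨hin, ?_⟩⟩
  · -- the vertex stepping inward at every coordinate sitting at `a m + w` is interior in the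
    -- directions of `c.2` (as `0 < w`), so its boundary coordinate is a fixed one
    obtain ⟨-, m, hvm⟩ :=
      hbdry _ ⟨c.2.filter (fun m => c.1 m = a m + w), filter_subset _ _, rfl⟩
    have hm : m ∉ c.2 := fun hm => by
      have := hin m
      simp only [mem_filter, hm, true_and, if_true] at hvm this
      split_ifs at hvm <;> omega
    exact ⟨m, hm, by simpa [hm] using hvm⟩
  · rintro v ⟨T, hT, rfl⟩
    refine ⟨dCellIn_iff.1 hin _ ⟨T, hT, rfl⟩, m, ?_⟩
    have hmT : m ∉ T := fun h => hm (hT h)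
    simpa [hmT] using hxm

lemma dCellIn_dualCell_iff {c : GCell n} :
    DCellIn a w (dualCell c) ↔
      ∀ m, a m - (if m ∈ c.2 then 1 else 0) ≤ c.1 m ∧ c.1 m ≤ a m + w := by
  refine forall_congr' fun m => ?_
  by_cases hm : m ∈ c.2 <;> simp [dualCell, hm]

lemma cellIn_iff_dCellIn_dualCell {c : GCell n} :
    CellIn a w c ↔ DCellIn a w (dualCell c) ∧
      ¬ ∃ m ∈ c.2, c.1 m = a m - 1 ∨ c.1 m = a m + w := by
  rw [dCellIn_dualCell_iff]
  simp only [not_exists, not_and, not_or]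
  refine ⟨fun h => ⟨fun m => ?_, fun m hm => ?_⟩, fun ⟨hin, hbdry⟩ m => ?_⟩
  · have := h m
    split_ifs at * <;> omega
  · have := h m
    simp only [hm, if_true] at this
    omega
  · have := hin m
    by_cases hm : m ∈ c.2
    · have := hbdry m hm
      simp only [hm, if_true] at *
      omega
    · simp only [hm, if_false] at *
      omega

lemma dCellIn_dualCell_of_cellIn_erase {c : GCell n} {i : Fin n}
    (h : CellIn a w (c.1, c.2.erase i)) : DCellIn a w (dualCell c) := by
  rw [dCellIn_dualCell_iff]
  intro m
  have := h m
  by_cases hmi : m = i <;> by_cases hm : m ∈ c.2 <;> simp_all <;> omega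

lemma dCellIn_dualCell_of_cellIn_shift_erase {c : GCell n} {i : Fin n} (hi : i ∈ c.2)
    (h : CellIn a w (c.1 + unitV n i, c.2.erase i)) : DCellIn a w (dualCell c) := by
  rw [dCellIn_dualCell_iff]
  intro m
  have := h m
  by_cases hmi : m = i <;> by_cases hm : m ∈ c.2 <;> simp_all [unitV] <;> omega

end DualCells

theorem cell_outside_iff_dual_outside_or_bdry_general (n : ℕ)
    (a : Fin n → ℤ) (w : ℕ) (hw : 0 < w) (c : GCell n) :
    (CellOutside a w c ↔
      DCellOutside a w (dualCell c) ∨ DCellOnBdry a w (dualCell c)) ∧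
    (CellOutside a w c →
      (∃ i ∈ c.2, CellIn a w (c.1, c.2.erase i) ∨
        CellIn a w (c.1 + unitV n i, c.2.erase i)) →
      DCellOnBdry a w (dualCell c)) := by
  have hout : CellOutside a w c ↔
      ¬ DCellIn a w (dualCell c) ∨ DCellOnBdry a w (dualCell c) := by
    rw [cellOutside_iff_not_cellIn, cellIn_iff_dCellIn_dualCell, dCellOnBdry_iff hw]
    simp only [dualCell, mem_compl, not_not, not_and_or, or_and_left, em', true_and]
  refine ⟨by rwa [dCellOutside_iff_not_dCellIn], fun h ⟨i, hi, hface⟩ => ?_⟩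
  have hin : DCellIn a w (dualCell c) :=
    hface.elim dCellIn_dualCell_of_cellIn_erase (dCellIn_dualCell_of_cellIn_shift_erase hi)
  exact (hout.1 h).resolve_left (not_not.2 hin)

/-- **Lemma 2.4 (Cells outside a cube and their duals).**
Let `B` be any cube in `ℤⁿ` and `0 ≤ k ≤ n`.  A `k`-cell `c` of `ℤⁿ` is outside `B` if and
only if its Hodge dual `*c` is either outside the dual cube `*B` or on the boundary of
`*B`.  Moreover, if `c` is a `k`-cell outside `B` that contains a `(k−1)`-cell of `B`
(a face of `c` all of whose vertices are in `B`), then `*c` belongs to the boundary of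
`*B`. -/
theorem cell_outside_iff_dual_outside_or_bdry (n : ℕ) (hn : 1 ≤ n) (k : ℕ) (hk : k ≤ n)
    (a : Fin n → ℤ) (w : ℕ) (hw : 0 < w) (c : GCell n) (hc : c.2.card = k) :
    (CellOutside a w c ↔
      DCellOutside a w (dualCell c) ∨ DCellOnBdry a w (dualCell c)) ∧
    (CellOutside a w c →
      (∃ i ∈ c.2, CellIn a w (c.1, c.2.erase i) ∨
        CellIn a w (c.1 + unitV n i, c.2.erase i)) →
      DCellOnBdry a w (dualCell c)) :=
  cell_outside_iff_dual_outside_or_bdry_general n a w hw c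
end

section
/- Poincaré lemma for the coderivative: Take any 1 ≤ k ≤ n−1 and an abelian group G. Let f be a G-valued k-form on ℤⁿ that is zero outside a finite region and satisfies δf = 0. Then there is a G-valued (k+1)-form h on ℤⁿ with f = δh. Moreover, if f is zero on every k-cell not in a cube B, then h can be chosen to be zero on every (k+1)-cell not in B. -/
/-!
Fix the cube `B = [a, a + w]ⁿ` and a direction `m`. For a `k`-form `f` vanishing outside `B`,
`prism f` integrates `f` along the `m`-lines from a cell up to the far face `x_m = a_m + w`, and
`faceSum f` collects the integral of `f` over each whole `m`-line of `B` on the near face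
`x_m = a_m`. Summing the identity `δf = 0` along an `m`-line telescopes, and this gives the
homotopy formula `f = δ (prism f) + faceSum f` for coclosed `f`. The form `faceSum f` is again
coclosed and vanishes outside `B`; it vanishes on the cells containing `dx_m`, and on those
containing `dx_j` whenever `f` does. Applying the formula once for every direction therefore
leaves a form vanishing on all `k`-cells (as `k ≥ 1`), and a finitely supported form vanishes
outside some cube.
-/

namespace CoderivativePoincare

open Finset Function

variable {n : ℕ} {G : Type*} [AddCommGroup G]

def ltSign (S : Finset (Fin n)) (i : Fin n) : ℤ := (-1) ^ (S.filter (fun j => j < i)).card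

lemma ltSign_mul_self (S : Finset (Fin n)) (i : Fin n) : ltSign S i * ltSign S i = 1 := by
  rw [ltSign, ← pow_add, ← two_mul, pow_mul, neg_one_sq, one_pow]

lemma ltSign_insert_self (S : Finset (Fin n)) (m : Fin n) :
    ltSign (insert m S) m = ltSign S m := by
  rw [ltSign, filter_insert, if_neg (lt_irrefl m), ltSign]

lemma ltSign_erase_self (S : Finset (Fin n)) (m : Fin n) : ltSign (S.erase m) m = ltSign S m := by
  rw [ltSign, filter_erase, erase_eq_of_notMem (by simp), ltSign]

-- `dx_i ∧ dx_m = -dx_m ∧ dx_i`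
lemma ltSign_mul_ltSign_insert {S : Finset (Fin n)} {m i : Fin n} (hm : m ∈ S) (hi : i ∉ S) :
    ltSign S i * ltSign (insert i S) m = -(ltSign S m * ltSign (S.erase m) i) := by
  have hne : i ≠ m := fun h => hi (h ▸ hm)
  have neg_pow : ∀ k : ℕ, -((-1 : ℤ) ^ k) = (-1) ^ (k + 1) := fun k => by ring
  rw [ltSign, ltSign, ltSign, ltSign, ← pow_add, ← pow_add, neg_pow]
  congr 1
  rcases hne.lt_or_gt with hlt | hlt
  · rw [filter_insert, if_pos hlt, card_insert_of_notMem (by simp [hi]), filter_erase,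
      erase_eq_of_notMem (by simp [hlt.not_gt])]
    omega
  · have hm' : m ∈ S.filter (fun j => j < i) := mem_filter.2 ⟨hm, hlt⟩
    have := card_pos.2 ⟨m, hm'⟩
    rw [filter_insert, if_neg hlt.not_gt, filter_erase, card_erase_of_mem hm']
    omega

def codiffTerm (f : GCell n → G) (i : Fin n) (c : GCell n) : G :=
  ltSign c.2 i • (f (c.1 - unitV n i, insert i c.2) - f (c.1, insert i c.2))

lemma codiff_eq_sum_codiffTerm (f : GCell n → G) (c : GCell n) :
    codiff f c = ∑ i ∈ c.2ᶜ, codiffTerm f i c := by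
  rw [codiff, ← sum_attach (c.2ᶜ)]
  refine sum_congr rfl fun i _ => ?_
  rw [pow_succ, mul_neg_one, neg_smul, ← smul_neg, neg_sub, codiffTerm, ltSign]

lemma codiff_add (f g : GCell n → G) (c : GCell n) :
    codiff (f + g) c = codiff f c + codiff g c := by
  simp only [codiff_eq_sum_codiffTerm, ← sum_add_distrib, codiffTerm, Pi.add_apply,
    add_sub_add_comm, smul_add]

lemma codiff_zero (c : GCell n) : codiff (0 : GCell n → G) c = 0 := by
  simp [codiff]

lemma sum_Icc_telescope (g : ℤ → G) {l u : ℤ} (h : l - 1 ≤ u) :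
    ∑ t ∈ Icc l u, (g (t - 1) - g t) = g (l - 1) - g u := by
  induction u, h using Int.leInduction with
  | base => simp
  | succ u hu ih =>
    rw [← insert_Icc_right_eq_Icc_add_one (by omega), sum_insert (by simp), ih,
      add_sub_cancel_right]
    abel

lemma sub_unitV_apply_of_ne {i m : Fin n} (h : i ≠ m) (x : Fin n → ℤ) :
    (x - unitV n i) m = x m := by
  simp [unitV, Ne.symm h]

lemma sub_unitV_apply_self (m : Fin n) (x : Fin n → ℤ) : (x - unitV n m) m = x m - 1 := by
  simp [unitV]

lemma update_sub_unitV_of_ne {i m : Fin n} (h : i ≠ m) (x : Fin n → ℤ) (s : ℤ) :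
    update (x - unitV n i) m s = update x m s - unitV n i := by
  ext j
  rcases eq_or_ne j m with rfl | hj <;> simp [unitV, *, Ne.symm h]

lemma update_sub_unitV_self (m : Fin n) (x : Fin n → ℤ) (s : ℤ) :
    update x m s - unitV n m = update x m (s - 1) := by
  ext j
  rcases eq_or_ne j m with rfl | hj <;> simp [unitV, *]

lemma update_sub_unitV_self_left (m : Fin n) (x : Fin n → ℤ) (s : ℤ) :
    update (x - unitV n m) m s = update x m s := by
  ext j
  rcases eq_or_ne j m with rfl | hj <;> simp [unitV, *]

lemma compl_eq_insert_compl_insert {S : Finset (Fin n)} {m : Fin n} (hm : m ∉ S) :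
    Sᶜ = insert m (insert m S)ᶜ := by
  rw [compl_insert, insert_erase (mem_compl.2 hm)]

lemma sum_codiff_update (f : GCell n → G) (x : Fin n → ℤ) {S : Finset (Fin n)} {m : Fin n}
    (hm : m ∉ S) {l u : ℤ} (h : l - 1 ≤ u) :
    ∑ t ∈ Icc l u, codiff f (update x m t, S) =
      ltSign S m • (f (update x m (l - 1), insert m S) - f (update x m u, insert m S)) +
      ∑ i ∈ (insert m S)ᶜ, ∑ t ∈ Icc l u, codiffTerm f i (update x m t, S) := by
  simp only [codiff_eq_sum_codiffTerm, compl_eq_insert_compl_insert hm,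
    sum_insert (notMem_compl.2 (mem_insert_self m S)), sum_add_distrib]
  rw [sum_comm]
  congr 1
  simp only [codiffTerm, update_sub_unitV_self, ← smul_sum]
  rw [sum_Icc_telescope (fun t => f (update x m t, insert m S)) h]

section Cube

variable (a : Fin n → ℤ) (w : ℕ) (k : ℕ) (m : Fin n)

def VanishesOutside (f : GCell n → G) : Prop :=
  ∀ c : GCell n, c.2.card = k → ¬ CellIn a w c → f c = 0

def IsCoclosed (f : GCell n → G) : Prop :=
  ∀ c : GCell n, c.2.card + 1 = k → codiff f c = 0

def VanishesAlong (f : GCell n → G) : Prop :=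
  ∀ c : GCell n, c.2.card = k → m ∈ c.2 → f c = 0

variable {a w k m}

lemma VanishesOutside.add {f g : GCell n → G} (hf : VanishesOutside a w k f)
    (hg : VanishesOutside a w k g) : VanishesOutside a w k (f + g) := fun c hc hout => by
  rw [Pi.add_apply, hf c hc hout, hg c hc hout, add_zero]

lemma not_cellIn_of_lt {c : GCell n} (h : c.1 m < a m) : ¬ CellIn a w c :=
  fun hc => (hc m).1.not_gt h

lemma not_cellIn_of_mem_of_le {c : GCell n} (hm : m ∈ c.2) (h : a m + w ≤ c.1 m) :
    ¬ CellIn a w c := fun hc => by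
  have := (hc m).2
  rw [if_pos hm] at this
  omega

lemma not_cellIn_of_gt {c : GCell n} (h : a m + w < c.1 m) : ¬ CellIn a w c := fun hc => by
  have := (hc m).2
  split_ifs at this <;> omega

lemma cellIn_of_cellIn_update {x : Fin n → ℤ} {S T : Finset (Fin n)} {t : ℤ}
    (h : CellIn a w (update x m t, T)) (hST : ∀ j ≠ m, j ∈ T ↔ j ∈ S)
    (hm : a m ≤ x m ∧ x m + (if m ∈ S then 1 else 0) ≤ a m + w) : CellIn a w (x, S) := by
  intro j
  rcases eq_or_ne j m with rfl | hj
  · exact hm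
  · simpa [update_of_ne hj, hST j hj] using h j

end Cube

section FaceSum

variable (a : Fin n → ℤ) (w : ℕ) (m : Fin n)

noncomputable def faceSum (f : GCell n → G) (c : GCell n) : G :=
  if m ∉ c.2 ∧ c.1 m = a m then ∑ t ∈ Icc (a m) (a m + w), f (update c.1 m t, c.2) else 0

variable {a w m} {k : ℕ} {f : GCell n → G} {x : Fin n → ℤ} {S : Finset (Fin n)}

lemma faceSum_apply (hm : m ∉ S) (hx : x m = a m) :
    faceSum a w m f (x, S) = ∑ t ∈ Icc (a m) (a m + w), f (update x m t, S) :=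
  if_pos ⟨hm, hx⟩

lemma faceSum_eq_zero_of_mem {c : GCell n} (hm : m ∈ c.2) : faceSum a w m f c = 0 :=
  if_neg fun h => h.1 hm

lemma faceSum_eq_zero_of_ne (hx : x m ≠ a m) : faceSum a w m f (x, S) = 0 :=
  if_neg fun h => hx h.2

lemma vanishesAlong_faceSum_self : VanishesAlong k m (faceSum a w m f) :=
  fun _ _ hm => faceSum_eq_zero_of_mem hm

lemma VanishesAlong.faceSum {j : Fin n} (hf : VanishesAlong k j f) :
    VanishesAlong k j (faceSum a w m f) := fun c hc hj => by
  unfold CoderivativePoincare.faceSum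
  split_ifs
  exacts [sum_eq_zero fun t _ => hf _ hc hj, rfl]

lemma VanishesOutside.faceSum (hf : VanishesOutside a w k f) :
    VanishesOutside a w k (faceSum a w m f) := by
  rintro ⟨x, S⟩ hc hout
  unfold CoderivativePoincare.faceSum
  split_ifs with h
  · obtain ⟨hm, hx : x m = a m⟩ := h
    refine sum_eq_zero fun t _ => hf _ hc fun hin => hout ?_
    refine cellIn_of_cellIn_update hin (fun _ _ => Iff.rfl) ?_
    rw [if_neg hm]
    omega
  · rfl

lemma codiffTerm_faceSum {i : Fin n} (hm : m ∉ insert i S) (hx : x m = a m) :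
    codiffTerm (faceSum a w m f) i (x, S) =
      ∑ t ∈ Icc (a m) (a m + w), codiffTerm f i (update x m t, S) := by
  have hi : i ≠ m := fun h => hm (h ▸ mem_insert_self i S)
  rw [codiffTerm, faceSum_apply hm (by rwa [sub_unitV_apply_of_ne hi]), faceSum_apply hm hx,
    ← sum_sub_distrib, smul_sum]
  simp only [codiffTerm, update_sub_unitV_of_ne hi]

lemma codiff_faceSum (hm : m ∉ S) (hx : x m = a m) :
    codiff (faceSum a w m f) (x, S) =
      ∑ i ∈ (insert m S)ᶜ, ∑ t ∈ Icc (a m) (a m + w),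
        codiffTerm f i (update x m t, S) := by
  rw [codiff_eq_sum_codiffTerm, compl_eq_insert_compl_insert hm,
    sum_insert (notMem_compl.2 (mem_insert_self m S)), codiffTerm,
    faceSum_eq_zero_of_mem (mem_insert_self m S), faceSum_eq_zero_of_mem (mem_insert_self m S),
    sub_zero, smul_zero, zero_add]
  refine sum_congr rfl fun i hi => codiffTerm_faceSum ?_ hx
  rw [mem_compl, mem_insert, not_or] at hi
  simp [hm, Ne.symm hi.1]

lemma codiff_faceSum_eq_zero (h : ¬(m ∉ S ∧ x m = a m)) :
    codiff (faceSum a w m f) (x, S) = 0 := by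
  refine (codiff_eq_sum_codiffTerm _ _).trans (sum_eq_zero fun i hi => ?_)
  by_cases hmi : m ∈ insert i S
  · rw [codiffTerm, faceSum_eq_zero_of_mem hmi, faceSum_eq_zero_of_mem hmi, sub_zero, smul_zero]
  · have hi : i ≠ m := fun h => hmi (h ▸ mem_insert_self i S)
    have hx : x m ≠ a m := fun hx => h ⟨fun hm => hmi (mem_insert_of_mem hm), hx⟩
    rw [codiffTerm, faceSum_eq_zero_of_ne ((sub_unitV_apply_of_ne hi x).trans_ne hx),
      faceSum_eq_zero_of_ne hx, sub_zero, smul_zero]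

lemma IsCoclosed.faceSum (hf : VanishesOutside a w k f) (hδ : IsCoclosed k f) :
    IsCoclosed k (faceSum a w m f) := by
  rintro ⟨x, S⟩ hc
  by_cases h : m ∉ S ∧ x m = a m
  · obtain ⟨hm, hx⟩ := h
    have hcard : (insert m S).card = k := by rw [card_insert_of_notMem hm]; exact hc
    have key := sum_codiff_update f x hm (l := a m) (u := a m + w) (by omega)
    rw [sum_eq_zero fun t _ => hδ (update x m t, S) hc,
      hf _ hcard (not_cellIn_of_lt (m := m) (by simp)),
      hf _ hcard (not_cellIn_of_mem_of_le (mem_insert_self m S) (by simp)),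
      sub_zero, smul_zero, zero_add] at key
    rw [codiff_faceSum hm hx, ← key]
  · exact codiff_faceSum_eq_zero h

end FaceSum

section Prism

variable (a : Fin n → ℤ) (w : ℕ) (m : Fin n)

noncomputable def prism (f : GCell n → G) (c : GCell n) : G :=
  if m ∈ c.2 ∧ a m ≤ c.1 m then
    ltSign c.2 m • ∑ s ∈ Icc (c.1 m + 1) (a m + w), f (update c.1 m s, c.2.erase m)
  else 0

variable {a w m} {k : ℕ} {f : GCell n → G} {x : Fin n → ℤ} {S : Finset (Fin n)}

lemma prism_apply (hm : m ∈ S) (hx : a m ≤ x m) :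
    prism a w m f (x, S) =
      ltSign S m • ∑ s ∈ Icc (x m + 1) (a m + w), f (update x m s, S.erase m) :=
  if_pos ⟨hm, hx⟩

lemma prism_eq_zero_of_notMem (hm : m ∉ S) : prism a w m f (x, S) = 0 :=
  if_neg fun h => hm h.1

lemma prism_eq_zero_of_lt (hx : x m < a m) : prism a w m f (x, S) = 0 :=
  if_neg fun h => hx.not_ge h.2

lemma prism_insert_self (hm : m ∉ S) :
    prism a w m f (x, insert m S) =
      if a m ≤ x m then ltSign S m • ∑ s ∈ Icc (x m + 1) (a m + w), f (update x m s, S)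
      else 0 := by
  simp only [prism, mem_insert_self, true_and, ltSign_insert_self, erase_insert hm]

lemma VanishesOutside.prism (hf : VanishesOutside a w k f) :
    VanishesOutside a w (k + 1) (prism a w m f) := by
  rintro ⟨x, S⟩ (hc : S.card = k + 1) hout
  unfold CoderivativePoincare.prism
  split_ifs with h
  · obtain ⟨hm, hx : a m ≤ x m⟩ := h
    rw [sum_eq_zero, smul_zero]
    intro s hs
    refine hf _ (by simp [card_erase_of_mem hm, hc]) fun hin => hout ?_
    refine cellIn_of_cellIn_update hin (fun j hj => mem_erase.trans (and_iff_right hj)) ?_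
    have hs' : x m + 1 ≤ s ∧ s ≤ a m + w := mem_Icc.1 hs
    rw [if_pos hm]
    omega
  · rfl

lemma codiffTerm_prism {i : Fin n} (hm : m ∈ S) (hi : i ∉ S) (hx : a m ≤ x m) :
    codiffTerm (prism a w m f) i (x, S) =
      -ltSign S m •
        ∑ s ∈ Icc (x m + 1) (a m + w), codiffTerm f i (update x m s, S.erase m) := by
  have hne : i ≠ m := fun h => hi (h ▸ hm)
  have hmi : m ∈ insert i S := mem_insert_of_mem hm
  rw [codiffTerm, prism_apply hmi ((sub_unitV_apply_of_ne hne x).symm ▸ hx),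
    prism_apply hmi hx, sub_unitV_apply_of_ne hne, erase_insert_of_ne hne, ← smul_sub,
    ← sum_sub_distrib, smul_smul, ltSign_mul_ltSign_insert hm hi, ← neg_mul, mul_smul, smul_sum]
  simp only [codiffTerm, update_sub_unitV_of_ne hne]

lemma codiff_prism_of_mem (hm : m ∈ S) (hx : a m ≤ x m) :
    codiff (prism a w m f) (x, S) = -ltSign S m •
      ∑ i ∈ Sᶜ, ∑ s ∈ Icc (x m + 1) (a m + w),
        codiffTerm f i (update x m s, S.erase m) := by
  rw [codiff_eq_sum_codiffTerm, smul_sum]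
  exact sum_congr rfl fun i hi => codiffTerm_prism hm (mem_compl.1 hi) hx

lemma codiff_prism_of_lt (hx : x m < a m) : codiff (prism a w m f) (x, S) = 0 := by
  refine (codiff_eq_sum_codiffTerm _ _).trans (sum_eq_zero fun i _ => ?_)
  have hx' : (x - unitV n i) m < a m := by
    rcases eq_or_ne i m with rfl | hi
    · rw [sub_unitV_apply_self]; omega
    · rwa [sub_unitV_apply_of_ne hi]
  rw [codiffTerm, prism_eq_zero_of_lt hx', prism_eq_zero_of_lt hx, sub_zero, smul_zero]

lemma codiff_prism_of_notMem (hm : m ∉ S) :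
    codiff (prism a w m f) (x, S) =
      ltSign S m •
        (prism a w m f (x - unitV n m, insert m S) - prism a w m f (x, insert m S)) := by
  rw [codiff_eq_sum_codiffTerm, compl_eq_insert_compl_insert hm,
    sum_insert (notMem_compl.2 (mem_insert_self m S)), codiffTerm, add_eq_left]
  refine sum_eq_zero fun i hi => ?_
  have hmi : m ∉ insert i S := by
    rw [mem_compl, mem_insert, not_or] at hi
    simp [hm, Ne.symm hi.1]
  rw [codiffTerm, prism_eq_zero_of_notMem hmi, prism_eq_zero_of_notMem hmi, sub_zero, smul_zero]

lemma eq_codiff_prism_of_mem (hf : VanishesOutside a w k f) (hδ : IsCoclosed k f) (hm : m ∈ S)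
    (hc : S.card = k) : f (x, S) = codiff (prism a w m f) (x, S) := by
  rcases lt_or_ge (x m) (a m) with hlt | hge
  · rw [codiff_prism_of_lt hlt, hf _ hc (not_cellIn_of_lt hlt)]
  rcases le_or_gt (x m) (a m + w) with hle | hgt
  · have hcard : (S.erase m).card + 1 = k := by
      rw [card_erase_of_mem hm, ← hc]
      exact Nat.sub_add_cancel (card_pos.2 ⟨m, hm⟩)
    have hline : ∑ i ∈ Sᶜ, ∑ s ∈ Icc (x m + 1) (a m + w),
        codiffTerm f i (update x m s, S.erase m) = -(ltSign S m • f (x, S)) := by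
      have key := sum_codiff_update f x (notMem_erase m S) (l := x m + 1) (u := a m + w)
        (by omega)
      rw [insert_erase hm, sum_eq_zero fun s _ => hδ (update x m s, S.erase m) hcard,
        add_sub_cancel_right, update_eq_self,
        hf (update x m (a m + w), S) hc (not_cellIn_of_mem_of_le hm (by simp)),
        sub_zero, ltSign_erase_self] at key
      exact eq_neg_of_add_eq_zero_right key.symm
    rw [codiff_prism_of_mem hm hge, hline, smul_neg, neg_smul, neg_neg, smul_smul,
      ltSign_mul_self, one_smul]
  · rw [codiff_prism_of_mem hm hge, Icc_eq_empty (by omega), hf _ hc (not_cellIn_of_gt hgt)]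
    simp

lemma eq_codiff_prism_add_faceSum_of_notMem (hf : VanishesOutside a w k f) (hm : m ∉ S)
    (hc : S.card = k) :
    f (x, S) = codiff (prism a w m f) (x, S) + faceSum a w m f (x, S) := by
  rw [codiff_prism_of_notMem hm, prism_insert_self hm, prism_insert_self hm,
    sub_unitV_apply_self, sub_add_cancel]
  simp only [update_sub_unitV_self_left]
  rcases lt_trichotomy (x m) (a m) with hlt | heq | hgt
  · rw [if_neg (by omega), if_neg (by omega), faceSum_eq_zero_of_ne hlt.ne,
      hf _ hc (not_cellIn_of_lt hlt)]
    simp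
  · rw [if_neg (by omega), if_pos heq.ge, faceSum_apply hm heq, heq,
      ← insert_Icc_add_one_left_eq_Icc (by omega : a m ≤ a m + w),
      sum_insert (by simp), ← heq, update_eq_self, zero_sub, smul_neg, smul_smul,
      ltSign_mul_self, one_smul]
    abel
  · rw [if_pos (by omega), if_pos hgt.le, faceSum_eq_zero_of_ne hgt.ne', add_zero, ← smul_sub,
      smul_smul, ltSign_mul_self, one_smul]
    rcases le_or_gt (x m) (a m + w) with hle | hgt'
    · rw [← insert_Icc_add_one_left_eq_Icc hle, sum_insert (by simp), update_eq_self,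
        add_sub_cancel_right]
    · rw [Icc_eq_empty (by omega), Icc_eq_empty (by omega), sub_self,
        hf _ hc (not_cellIn_of_gt hgt')]

lemma eq_codiff_prism_add_faceSum (hf : VanishesOutside a w k f) (hδ : IsCoclosed k f)
    {c : GCell n} (hc : c.2.card = k) :
    f c = codiff (prism a w m f) c + faceSum a w m f c := by
  obtain ⟨x, S⟩ := c
  by_cases hm : m ∈ S
  · rw [faceSum_eq_zero_of_mem hm, add_zero]
    exact eq_codiff_prism_of_mem hf hδ hm hc
  · exact eq_codiff_prism_add_faceSum_of_notMem hf hm hc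

end Prism

variable {a : Fin n → ℤ} {w k : ℕ} {f : GCell n → G}

theorem exists_eq_codiff_add_of_vanishesOutside (hf : VanishesOutside a w k f)
    (hδ : IsCoclosed k f) (D : Finset (Fin n)) :
    ∃ h g : GCell n → G, VanishesOutside a w (k + 1) h ∧ VanishesOutside a w k g ∧
      IsCoclosed k g ∧ (∀ m ∈ D, VanishesAlong k m g) ∧
      ∀ c : GCell n, c.2.card = k → f c = codiff h c + g c := by
  induction D using Finset.induction_on with
  | empty =>
    exact ⟨0, f, fun _ _ _ => rfl, hf, hδ, by simp, fun c _ => by rw [codiff_zero, zero_add]⟩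
  | insert m D _ ih =>
    obtain ⟨h, g, hh, hg, hgδ, hgD, hfg⟩ := ih
    refine ⟨h + prism a w m g, faceSum a w m g, hh.add hg.prism, hg.faceSum,
      hgδ.faceSum hg, fun j hj => ?_, fun c hc => ?_⟩
    · rcases mem_insert.1 hj with rfl | hj
      exacts [vanishesAlong_faceSum_self, (hgD j hj).faceSum]
    · rw [hfg c hc, eq_codiff_prism_add_faceSum hg hgδ hc, codiff_add]
      abel

theorem exists_eq_codiff_of_vanishesOutside (hk : 1 ≤ k) (hf : VanishesOutside a w k f)
    (hδ : IsCoclosed k f) :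
    ∃ h : GCell n → G, VanishesOutside a w (k + 1) h ∧
      ∀ c : GCell n, c.2.card = k → f c = codiff h c := by
  obtain ⟨h, g, hh, -, -, hg, hfg⟩ := exists_eq_codiff_add_of_vanishesOutside hf hδ univ
  refine ⟨h, hh, fun c hc => ?_⟩
  obtain ⟨m, hm⟩ := card_pos.1 (hc ▸ hk : 0 < c.2.card)
  rw [hfg c hc, hg m (mem_univ m) c hc hm, add_zero]

lemma exists_vanishesOutside_of_finite (hfin : {c : GCell n | c.2.card = k ∧ f c ≠ 0}.Finite) :
    ∃ (a : Fin n → ℤ) (w : ℕ), VanishesOutside a w k f := by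
  obtain ⟨N, hN⟩ := (hfin.image fun c : GCell n => univ.sup fun m => (c.1 m).natAbs).bddAbove
  refine ⟨fun _ => -N, 2 * N + 1, fun c hc hout => by_contra fun hne => hout fun m => ?_⟩
  have := (le_sup (f := fun m => (c.1 m).natAbs) (mem_univ m)).trans
    (hN ⟨c, ⟨hc, hne⟩, rfl⟩)
  dsimp only
  split_ifs <;> omega

end CoderivativePoincare

theorem poincare_lemma_coderivative_general (n : ℕ) (G : Type*) [AddCommGroup G]
    (k : ℕ) (hk1 : 1 ≤ k)
    (f : GCell n → G)
    (hfin : {c : GCell n | c.2.card = k ∧ f c ≠ 0}.Finite)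
    (hδ : ∀ c : GCell n, c.2.card + 1 = k → codiff f c = 0) :
    (∃ h : GCell n → G, ∀ c : GCell n, c.2.card = k → f c = codiff h c) ∧
    (∀ (a : Fin n → ℤ) (w : ℕ), 0 < w →
      (∀ c : GCell n, c.2.card = k → ¬ CellIn a w c → f c = 0) →
      ∃ h : GCell n → G,
        (∀ c : GCell n, c.2.card = k + 1 → ¬ CellIn a w c → h c = 0) ∧
        ∀ c : GCell n, c.2.card = k → f c = codiff h c) := by
  refine ⟨?_, fun a w _ hf =>
    CoderivativePoincare.exists_eq_codiff_of_vanishesOutside hk1 hf hδ⟩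
  obtain ⟨a, w, hf⟩ := CoderivativePoincare.exists_vanishesOutside_of_finite hfin
  obtain ⟨h, -, hfh⟩ := CoderivativePoincare.exists_eq_codiff_of_vanishesOutside hk1 hf hδ
  exact ⟨h, hfh⟩

/-- **Lemma 2.7 (Poincaré lemma for the coderivative).**
Take any `1 ≤ k ≤ n − 1` and an abelian group `G`.  Let `f` be a `G`-valued `k`-form on
`ℤⁿ` that is zero outside a finite region and satisfies `δf = 0`.  Then there is a
`G`-valued `(k+1)`-form `h` on `ℤⁿ` with `f = δh`.  Moreover, if `f` is zero on every
`k`-cell not in a cube `B`, then `h` can be chosen to be zero on every `(k+1)`-cell not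
in `B`. -/
theorem poincare_lemma_coderivative (n : ℕ) (G : Type*) [AddCommGroup G]
    (k : ℕ) (hk1 : 1 ≤ k) (hkn : k + 1 ≤ n)
    (f : GCell n → G)
    (hfin : {c : GCell n | c.2.card = k ∧ f c ≠ 0}.Finite)
    (hδ : ∀ c : GCell n, c.2.card + 1 = k → codiff f c = 0) :
    (∃ h : GCell n → G, ∀ c : GCell n, c.2.card = k → f c = codiff h c) ∧
    (∀ (a : Fin n → ℤ) (w : ℕ), 0 < w →
      (∀ c : GCell n, c.2.card = k → ¬ CellIn a w c → f c = 0) →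
      ∃ h : GCell n → G,
        (∀ c : GCell n, c.2.card = k + 1 → ¬ CellIn a w c → h c = 0) ∧
        ∀ c : GCell n, c.2.card = k → f c = codiff h c) :=
  poincare_lemma_coderivative_general n G k hk1 f hfin hδ
end
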